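/- Let Γ be a finite group and G a Γ-group possessing a finite decreasing filtration G = U₀ ⊇ U₁ ⊇ ⋯ ⊇ Uₙ = 1 by Γ-stable normal subgroups of G such that each quotient Uᵢ/Uᵢ₊₁ is abelian and multiplication by #Γ is bijective on Uᵢ/Uᵢ₊₁. Then H¹(Γ, G) is trivial: every 1-cocycle z : Γ → G is of the form z(σ) = g⁻¹·(σ·g) for some g ∈ G. -/

import Mathlib

/-!
Induct along the filtration: once a cocycle is cohomologous to one with values in `Uᵢ`, its
image in the abelian layer `Uᵢ/Uᵢ₊₁` is a coboundary, and twisting by a lift of the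
trivialising element pushes it into `Uᵢ₊₁`.

For the abelian layer, put `N = #Γ` and `c = ∏_τ a τ`. Summing the cocycle identity over `τ`
gives `σ • c = (a σ)⁻ᴺ c`; if `h ^ N = c`, then `a σ` and `h (σ • h)⁻¹` have the same
`N`-th power, hence are equal.
-/

section Abelian

variable {Γ A : Type*} [Group Γ] [Fintype Γ] [CommGroup A]

/- Only the cocycle identity for `φ` is used, not that `φ` is an action, so the maps induced on
the layers below need no action laws. -/
theorem map_prod_of_cocycle (φ : Γ → A →* A) (a : Γ → A)
    (ha : ∀ σ τ, a (σ * τ) = a σ * φ σ (a τ)) (σ : Γ) :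
    φ σ (∏ τ, a τ) = (a σ)⁻¹ ^ Fintype.card Γ * ∏ τ, a τ := by
  have hφa : ∀ τ, φ σ (a τ) = (a σ)⁻¹ * a (σ * τ) := fun τ => by
    rw [ha]; group
  simp only [map_prod, hφa, Finset.prod_mul_distrib, Finset.prod_const, Finset.card_univ]
  exact congrArg _ (Equiv.prod_comp (Equiv.mulLeft σ) a)

theorem exists_eq_inv_mul_map_of_bijective_pow (φ : Γ → A →* A)
    (hpow : Function.Bijective fun x : A => x ^ Fintype.card Γ) (a : Γ → A)
    (ha : ∀ σ τ, a (σ * τ) = a σ * φ σ (a τ)) :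
    ∃ g, ∀ σ, a σ = g⁻¹ * φ σ g := by
  obtain ⟨h, hh : h ^ Fintype.card Γ = ∏ τ, a τ⟩ := hpow.2 (∏ τ, a τ)
  refine ⟨h⁻¹, fun σ => ?_⟩
  have key : (a σ * φ σ h * h⁻¹) ^ Fintype.card Γ = 1 ^ Fintype.card Γ := by
    rw [mul_pow, mul_pow, inv_pow, ← map_pow, hh, map_prod_of_cocycle φ a ha, inv_pow,
      one_pow]
    group
  rw [inv_inv, map_inv, ← mul_inv_eq_one, mul_inv_rev, inv_inv, ← mul_assoc]
  exact hpow.1 key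

end Abelian

section Layer

variable {Γ G : Type*} [Group Γ] [Group G] [MulDistribMulAction Γ G] {W V : Subgroup G}
  [V.Normal]

abbrev layerCommGroup (hcomm : ∀ x ∈ W, ∀ y ∈ W, x * y * x⁻¹ * y⁻¹ ∈ V) :
    CommGroup (W ⧸ V.subgroupOf W) :=
  { QuotientGroup.Quotient.group (V.subgroupOf W) with
    mul_comm := by
      intro a b
      induction a using QuotientGroup.induction_on with | H x => ?_
      induction b using QuotientGroup.induction_on with | H y => ?_
      rw [← QuotientGroup.mk_mul, ← QuotientGroup.mk_mul, QuotientGroup.eq,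
        Subgroup.mem_subgroupOf]
      simpa [mul_assoc] using hcomm _ (W.inv_mem y.2) _ (W.inv_mem x.2) }

theorem bijective_pow_layer (hcomm : ∀ x ∈ W, ∀ y ∈ W, x * y * x⁻¹ * y⁻¹ ∈ V) {n : ℕ}
    (hinj : ∀ x ∈ W, x ^ n ∈ V → x ∈ V) (hsurj : ∀ x ∈ W, ∃ y ∈ W, y ^ n * x⁻¹ ∈ V) :
    Function.Bijective fun x : W ⧸ V.subgroupOf W => x ^ n := by
  let _ := layerCommGroup hcomm
  refine ⟨(injective_iff_map_eq_one (powMonoidHom n : W ⧸ V.subgroupOf W →* _)).2 ?_, ?_⟩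
  · intro a ha
    induction a using QuotientGroup.induction_on with | H x => ?_
    rw [powMonoidHom_apply, ← QuotientGroup.mk_pow, QuotientGroup.eq_one_iff] at ha
    exact (QuotientGroup.eq_one_iff _).2 (hinj x x.2 ha)
  · intro a
    induction a using QuotientGroup.induction_on with | H x => ?_
    obtain ⟨y, hyW, hy⟩ := hsurj x x.2
    refine ⟨QuotientGroup.mk ⟨y, hyW⟩, ?_⟩
    dsimp only
    rw [← QuotientGroup.mk_pow, ← mul_inv_eq_one, ← QuotientGroup.mk_inv, ← QuotientGroup.mk_mul,
      QuotientGroup.eq_one_iff]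
    exact hy

def layerHom (hW : ∀ σ : Γ, ∀ x ∈ W, σ • x ∈ W) (hV : ∀ σ : Γ, ∀ x ∈ V, σ • x ∈ V)
    (σ : Γ) : W ⧸ V.subgroupOf W →* W ⧸ V.subgroupOf W :=
  QuotientGroup.map _ _
    (((MulDistribMulAction.toMonoidHom G σ).domRestrict W).codRestrict W fun x => hW σ x x.2)
    fun x hx => hV σ x hx

theorem exists_inv_mul_smul_mem [Fintype Γ] (hW : ∀ σ : Γ, ∀ x ∈ W, σ • x ∈ W)
    (hV : ∀ σ : Γ, ∀ x ∈ V, σ • x ∈ V) (hcomm : ∀ x ∈ W, ∀ y ∈ W, x * y * x⁻¹ * y⁻¹ ∈ V)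
    (hinj : ∀ x ∈ W, x ^ Fintype.card Γ ∈ V → x ∈ V)
    (hsurj : ∀ x ∈ W, ∃ y ∈ W, y ^ Fintype.card Γ * x⁻¹ ∈ V)
    (w : Γ → G) (hw : ∀ σ τ : Γ, w (σ * τ) = w σ * σ • w τ) (hwW : ∀ σ, w σ ∈ W) :
    ∃ g : G, ∀ σ, g⁻¹ * w σ * σ • g ∈ V := by
  let _ := layerCommGroup hcomm
  obtain ⟨⟨g⟩, hg⟩ := exists_eq_inv_mul_map_of_bijective_pow (layerHom hW hV)
    (bijective_pow_layer hcomm hinj hsurj) (fun σ => QuotientGroup.mk ⟨w σ, hwW σ⟩)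
    fun σ τ => congrArg ((↑) : W → W ⧸ V.subgroupOf W) (Subtype.ext (hw σ τ))
  refine ⟨g⁻¹, fun σ => ?_⟩
  have hone : (QuotientGroup.mk (g * ⟨w σ, hwW σ⟩ * ⟨σ • g, hW σ g g.2⟩⁻¹) :
      W ⧸ V.subgroupOf W) = 1 := by
    rw [QuotientGroup.mk_mul, QuotientGroup.mk_mul, QuotientGroup.mk_inv, hg σ]
    exact mul_inv_eq_one.2 (mul_inv_cancel_left _ _)
  simpa [smul_inv', Subgroup.mem_subgroupOf] using (QuotientGroup.eq_one_iff _).1 hone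

end Layer

section Filtration

variable {Γ G : Type*} [Group Γ] [Group G] [MulDistribMulAction Γ G]

theorem mul_inv_mul_smul_mul (z : Γ → G) (g h : G) (σ : Γ) :
    (g * h)⁻¹ * z σ * σ • (g * h) = h⁻¹ * (g⁻¹ * z σ * σ • g) * σ • h := by
  rw [smul_mul']; group

theorem isCocycle_inv_mul_smul {z : Γ → G} (hz : ∀ σ τ : Γ, z (σ * τ) = z σ * σ • z τ) (g : G)
    (σ τ : Γ) :
    g⁻¹ * z (σ * τ) * (σ * τ) • g = g⁻¹ * z σ * σ • g * σ • (g⁻¹ * z τ * τ • g) := by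
  simp only [hz, mul_smul, smul_mul', smul_inv']
  group

theorem exists_inv_mul_smul_mem_of_filtration [Fintype Γ] (U : ℕ → Subgroup G)
    (htop : U 0 = ⊤) (hnormal : ∀ i, (U i).Normal)
    (hstable : ∀ i, ∀ σ : Γ, ∀ x ∈ U i, σ • x ∈ U i)
    (habelian : ∀ i, ∀ x ∈ U i, ∀ y ∈ U i, x * y * x⁻¹ * y⁻¹ ∈ U (i + 1))
    (hinjcard : ∀ i, ∀ x ∈ U i, x ^ Fintype.card Γ ∈ U (i + 1) → x ∈ U (i + 1))
    (hsurjcard : ∀ i, ∀ x ∈ U i, ∃ y ∈ U i, y ^ Fintype.card Γ * x⁻¹ ∈ U (i + 1))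
    {z : Γ → G} (hz : ∀ σ τ : Γ, z (σ * τ) = z σ * σ • z τ) (i : ℕ) :
    ∃ g : G, ∀ σ, g⁻¹ * z σ * σ • g ∈ U i := by
  induction i with
  | zero => exact ⟨1, fun σ => htop ▸ Subgroup.mem_top _⟩
  | succ i ih =>
    obtain ⟨g, hg⟩ := ih
    have := hnormal (i + 1)
    obtain ⟨h, hh⟩ := exists_inv_mul_smul_mem (hstable i) (hstable (i + 1)) (habelian i)
      (hinjcard i) (hsurjcard i) _ (isCocycle_inv_mul_smul hz g) hg
    exact ⟨g * h, fun σ => mul_inv_mul_smul_mul z g h σ ▸ hh σ⟩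

end Filtration

theorem stmt_6_general (Γ G : Type*) [Group Γ] [Fintype Γ] [Group G]
    [MulDistribMulAction Γ G] (n : ℕ) (U : ℕ → Subgroup G)
    (htop : U 0 = ⊤) (hbot : U n = ⊥)
    (hnormal : ∀ i, (U i).Normal)
    (hstable : ∀ i, ∀ σ : Γ, ∀ x ∈ U i, σ • x ∈ U i)
    -- Uᵢ/Uᵢ₊₁ is abelian:
    (habelian : ∀ i, ∀ x ∈ U i, ∀ y ∈ U i, x * y * x⁻¹ * y⁻¹ ∈ U (i + 1))
    -- multiplication by #Γ is injective on Uᵢ/Uᵢ₊₁: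
    (hinjcard : ∀ i, ∀ x ∈ U i, x ^ (Fintype.card Γ) ∈ U (i + 1) → x ∈ U (i + 1))
    -- multiplication by #Γ is surjective on Uᵢ/Uᵢ₊₁:
    (hsurjcard : ∀ i, ∀ x ∈ U i, ∃ y ∈ U i, y ^ (Fintype.card Γ) * x⁻¹ ∈ U (i + 1))
    (z : Γ → G) (hz : ∀ σ τ : Γ, z (σ * τ) = z σ * σ • z τ) :
    ∃ g : G, ∀ σ : Γ, z σ = g⁻¹ * σ • g := by
  obtain ⟨g, hg⟩ := exists_inv_mul_smul_mem_of_filtration U htop hnormal hstable habelian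
    hinjcard hsurjcard hz n
  refine ⟨g⁻¹, fun σ => ?_⟩
  have hg1 : g⁻¹ * z σ * σ • g = 1 := by simpa [hbot] using hg σ
  rw [inv_inv, smul_inv', ← inv_mul_eq_iff_eq_mul, ← mul_inv_eq_one, inv_inv, hg1]

/-- Let Γ be a finite group and G a Γ-group with a finite decreasing filtration
G = U₀ ⊇ U₁ ⊇ ⋯ ⊇ Uₙ = 1 by Γ-stable normal subgroups with abelian quotients
Uᵢ/Uᵢ₊₁ on which multiplication by #Γ is bijective.  Then H¹(Γ, G) = 1:
every 1-cocycle is a coboundary. -/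
theorem stmt_6 (Γ G : Type*) [Group Γ] [Fintype Γ] [Group G]
    [MulDistribMulAction Γ G] (n : ℕ) (U : ℕ → Subgroup G)
    (htop : U 0 = ⊤) (hbot : U n = ⊥)
    (hdec : ∀ i, U (i + 1) ≤ U i)
    (hnormal : ∀ i, (U i).Normal)
    (hstable : ∀ i, ∀ σ : Γ, ∀ x ∈ U i, σ • x ∈ U i)
    -- Uᵢ/Uᵢ₊₁ is abelian:
    (habelian : ∀ i, ∀ x ∈ U i, ∀ y ∈ U i, x * y * x⁻¹ * y⁻¹ ∈ U (i + 1))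
    -- multiplication by #Γ is injective on Uᵢ/Uᵢ₊₁:
    (hinjcard : ∀ i, ∀ x ∈ U i, x ^ (Fintype.card Γ) ∈ U (i + 1) → x ∈ U (i + 1))
    -- multiplication by #Γ is surjective on Uᵢ/Uᵢ₊₁:
    (hsurjcard : ∀ i, ∀ x ∈ U i, ∃ y ∈ U i, y ^ (Fintype.card Γ) * x⁻¹ ∈ U (i + 1))
    (z : Γ → G) (hz : ∀ σ τ : Γ, z (σ * τ) = z σ * σ • z τ) :
    ∃ g : G, ∀ σ : Γ, z σ = g⁻¹ * σ • g :=
  stmt_6_general Γ G n U htop hbot hnormal hstable habelian hinjcard hsurjcard z hz
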